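/- Let τ ∈ (0,1) and k ∈ ℤ, and let ‖x‖_{τ,k} = |x_k| + ∑_{i≠k} |x_i| |i−k|^τ on the space l_{τ,k} of sequences with finite norm. Let C = (C_{ij})_{i,j∈ℤ} be a symmetric matrix with C_{ii} = 1 for all i, and suppose ε := sup_j ∑_{i≠j} |C_{ij}| |i−j|^τ < ∞. Then the off-diagonal part Ċ (with Ċ_{ij} = C_{ij} for i ≠ j, Ċ_{ii} = 0) defines a bounded operator on l_{τ,k} with operator norm at most 3ε. -/
import Mathlib

open scoped NNReal

lemma rpow_subadd_aux {p : ℝ} (hp0 : 0 ≤ p) (hp1 : p ≤ 1) {a b : ℝ} (ha : 0 ≤ a) (hb : 0 ≤ b) :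
    (a + b) ^ p ≤ a ^ p + b ^ p := by
  have h := NNReal.rpow_add_le_add_rpow a.toNNReal b.toNNReal hp0 hp1
  rw [← NNReal.coe_le_coe] at h
  push_cast at h
  rwa [Real.coe_toNNReal a ha, Real.coe_toNNReal b hb] at h

lemma indicator_ne_eq (j : ℤ) (f : ℤ → ℝ) :
    Set.indicator {i : ℤ | i ≠ j} f = fun i => if i = j then 0 else f i := by
  funext i
  by_cases h : i = j <;> simp [Set.indicator_apply, h]

set_option maxHeartbeats 1600000 in
theorem offdiag_operator_bound (τ : ℝ) (hτ0 : 0 < τ) (hτ1 : τ < 1) (k : ℤ)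
    (C : ℤ → ℤ → ℝ) (hsymm : ∀ i j, C i j = C j i) (hdiag : ∀ i, C i i = 1)
    (ε : ℝ) (hε : 0 ≤ ε)
    (hsum : ∀ j : ℤ, Summable (fun i : {i : ℤ // i ≠ j} =>
      |C i.1 j| * |(i.1 : ℝ) - (j : ℝ)| ^ τ))
    (hoff : ∀ j : ℤ, (∑' i : {i : ℤ // i ≠ j},
      |C i.1 j| * |(i.1 : ℝ) - (j : ℝ)| ^ τ) ≤ ε)
    (x : ℤ → ℝ)
    (hx : Summable (fun i : ℤ =>
      |x i| * (if i = k then 1 else |(i : ℝ) - (k : ℝ)| ^ τ))) :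
    Summable (fun i : ℤ =>
      |∑' j : {j : ℤ // j ≠ i}, C i j.1 * x j.1| *
        (if i = k then 1 else |(i : ℝ) - (k : ℝ)| ^ τ)) ∧
    (∑' i : ℤ,
        |∑' j : {j : ℤ // j ≠ i}, C i j.1 * x j.1| *
          (if i = k then 1 else |(i : ℝ) - (k : ℝ)| ^ τ))
      ≤ 3 * ε * ∑' i : ℤ,
          |x i| * (if i = k then 1 else |(i : ℝ) - (k : ℝ)| ^ τ) := by
  set W : ℤ → ℝ := fun i => if i = k then 1 else |(i : ℝ) - (k : ℝ)| ^ τ with hWdef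
  -- basic facts about weights
  have habs_ge : ∀ i j : ℤ, i ≠ j → (1 : ℝ) ≤ |(i : ℝ) - (j : ℝ)| := by
    intro i j h
    have hc : ((i - j : ℤ) : ℝ) = (i : ℝ) - (j : ℝ) := by push_cast; ring
    rw [← hc, ← Int.cast_abs]
    exact_mod_cast Int.one_le_abs (sub_ne_zero.mpr h)
  have hpow_ge : ∀ i j : ℤ, i ≠ j → (1 : ℝ) ≤ |(i : ℝ) - (j : ℝ)| ^ τ := fun i j h =>
    Real.one_le_rpow (habs_ge i j h) hτ0.le
  have hW1 : ∀ i, (1 : ℝ) ≤ W i := by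
    intro i
    by_cases h : i = k
    · simp [hWdef, h]
    · simpa [hWdef, h] using hpow_ge i k h
  have hW0 : ∀ i, (0 : ℝ) ≤ W i := fun i => le_trans zero_le_one (hW1 i)
  have hWle : ∀ i j : ℤ, i ≠ j → W i ≤ |(i : ℝ) - (j : ℝ)| ^ τ + W j := by
    intro i j hij
    by_cases hik : i = k
    · have h1 : W i = 1 := by simp [hWdef, hik]
      rw [h1]
      linarith [hpow_ge i j hij, hW0 j]
    · by_cases hjk : j = k
      · have h1 : W j = 1 := by simp [hWdef, hjk]
        have h2 : W i = |(i : ℝ) - (k : ℝ)| ^ τ := by simp [hWdef, hik]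
        have h3 : |(i : ℝ) - (k : ℝ)| ^ τ = |(i : ℝ) - (j : ℝ)| ^ τ := by rw [hjk]
        rw [h1, h2, h3]
        linarith
      · simp only [hWdef, if_neg hik, if_neg hjk]
        have htri : |(i : ℝ) - (k : ℝ)| ≤ |(i : ℝ) - (j : ℝ)| + |(j : ℝ) - (k : ℝ)| :=
          abs_sub_le _ _ _
        calc |(i : ℝ) - (k : ℝ)| ^ τ
            ≤ (|(i : ℝ) - (j : ℝ)| + |(j : ℝ) - (k : ℝ)|) ^ τ :=
              Real.rpow_le_rpow (abs_nonneg _) htri hτ0.le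
          _ ≤ |(i : ℝ) - (j : ℝ)| ^ τ + |(j : ℝ) - (k : ℝ)| ^ τ :=
              rpow_subadd_aux hτ0.le hτ1.le (abs_nonneg _) (abs_nonneg _)
  -- entrywise bounds
  have hCb : ∀ i j : ℤ, i ≠ j → |C i j| * |(i : ℝ) - (j : ℝ)| ^ τ ≤ ε := by
    intro i j h
    refine le_trans ?_ (hoff j)
    exact Summable.le_tsum (hsum j) ⟨i, h⟩ (fun b _ =>
      mul_nonneg (abs_nonneg _) (Real.rpow_nonneg (abs_nonneg _) _))
  have hCε : ∀ i j : ℤ, i ≠ j → |C i j| ≤ ε := by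
    intro i j h
    calc |C i j| = |C i j| * 1 := (mul_one _).symm
      _ ≤ |C i j| * |(i : ℝ) - (j : ℝ)| ^ τ :=
          mul_le_mul_of_nonneg_left (hpow_ge i j h) (abs_nonneg _)
      _ ≤ ε := hCb i j h
  -- summability of |x|
  have habs : Summable fun i => |x i| := by
    refine hx.of_nonneg_of_le (fun i => abs_nonneg _) (fun i => ?_)
    calc |x i| = |x i| * 1 := (mul_one _).symm
      _ ≤ |x i| * W i := mul_le_mul_of_nonneg_left (hW1 i) (abs_nonneg _)
  set X : ℝ := ∑' i, |x i| * W i with hXdef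
  have hX0 : 0 ≤ X := tsum_nonneg fun i => mul_nonneg (abs_nonneg _) (hW0 i)
  have habsX : ∑' i, |x i| ≤ X := by
    refine Summable.tsum_le_tsum (fun i => ?_) habs hx
    calc |x i| = |x i| * 1 := (mul_one _).symm
      _ ≤ |x i| * W i := mul_le_mul_of_nonneg_left (hW1 i) (abs_nonneg _)
  -- the column functions
  set g : ℤ → ℤ → ℝ := fun j i => if i = j then 0 else |C i j| * |(i : ℝ) - (j : ℝ)| ^ τ
    with hgdef
  set c : ℤ → ℤ → ℝ := fun j i => if i = j then 0 else |C i j| with hcdef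
  have hg0 : ∀ j i, 0 ≤ g j i := by
    intro j i
    by_cases h : i = j <;>
      simp [hgdef, h, mul_nonneg (abs_nonneg _) (Real.rpow_nonneg (abs_nonneg _) _)]
  have hc0 : ∀ j i, 0 ≤ c j i := by
    intro j i; by_cases h : i = j <;> simp [hcdef, h, abs_nonneg]
  have hgs : ∀ j, Summable (g j) := by
    intro j
    have := summable_subtype_iff_indicator
      (s := {i : ℤ | i ≠ j}) (f := fun i => |C i j| * |(i : ℝ) - (j : ℝ)| ^ τ) |>.mp (hsum j)
    rwa [indicator_ne_eq] at this
  have hgt : ∀ j, ∑' i, g j i ≤ ε := by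
    intro j
    have h2 := tsum_subtype {i : ℤ | i ≠ j} (fun i => |C i j| * |(i : ℝ) - (j : ℝ)| ^ τ)
    rw [indicator_ne_eq] at h2
    have h1 : (∑' i : {i : ℤ // i ≠ j}, |C i.1 j| * |(i.1 : ℝ) - (j : ℝ)| ^ τ)
        = ∑' i : ℤ, g j i := h2
    rw [← h1]; exact hoff j
  have hcleg : ∀ j i, c j i ≤ g j i := by
    intro j i
    by_cases h : i = j
    · simp [hcdef, hgdef, h]
    · simp only [hcdef, hgdef, if_neg h]
      calc |C i j| = |C i j| * 1 := (mul_one _).symm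
        _ ≤ |C i j| * |(i : ℝ) - (j : ℝ)| ^ τ :=
            mul_le_mul_of_nonneg_left (hpow_ge i j h) (abs_nonneg _)
  have hcs : ∀ j, Summable (c j) := fun j => (hgs j).of_nonneg_of_le (hc0 j) (hcleg j)
  have hct : ∀ j, ∑' i, c j i ≤ ε := fun j =>
    le_trans (Summable.tsum_le_tsum (hcleg j) (hcs j) (hgs j)) (hgt j)
  -- the double sums
  set F : ℤ × ℤ → ℝ := fun p => (if p.2 = p.1 then 0 else |C p.1 p.2| * |x p.2|) * W p.1
    with hFdef
  have hF0 : ∀ p, 0 ≤ F p := by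
    intro p
    by_cases h : p.2 = p.1 <;>
      simp [hFdef, h, mul_nonneg (mul_nonneg (abs_nonneg _) (abs_nonneg _)) (hW0 _), hW0]
  set Bg : ℤ × ℤ → ℝ := fun p => g p.1 p.2 * |x p.1| with hBgdef
  set Bc : ℤ × ℤ → ℝ := fun p => c p.1 p.2 * (|x p.1| * W p.1) with hBcdef
  have hBg0 : ∀ p, 0 ≤ Bg p := fun p => mul_nonneg (hg0 _ _) (abs_nonneg _)
  have hBc0 : ∀ p, 0 ≤ Bc p := fun p =>
    mul_nonneg (hc0 _ _) (mul_nonneg (abs_nonneg _) (hW0 _))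
  have houterg : (fun j => ∑' i, Bg (j, i)) = fun j => (∑' i, g j i) * |x j| := by
    funext j
    show (∑' i, g j i * |x j|) = _
    exact tsum_mul_right
  have houterc : (fun j => ∑' i, Bc (j, i)) = fun j => (∑' i, c j i) * (|x j| * W j) := by
    funext j
    show (∑' i, c j i * (|x j| * W j)) = _
    exact tsum_mul_right
  have hgout : Summable fun j => (∑' i, g j i) * |x j| :=
    Summable.of_nonneg_of_le
      (fun j => mul_nonneg (tsum_nonneg fun i => hg0 j i) (abs_nonneg _))
      (fun j => mul_le_mul_of_nonneg_right (hgt j) (abs_nonneg _)) (habs.mul_left ε)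
  have hcout : Summable fun j => (∑' i, c j i) * (|x j| * W j) :=
    Summable.of_nonneg_of_le
      (fun j => mul_nonneg (tsum_nonneg fun i => hc0 j i)
        (mul_nonneg (abs_nonneg _) (hW0 _)))
      (fun j => mul_le_mul_of_nonneg_right (hct j)
        (mul_nonneg (abs_nonneg _) (hW0 _))) (hx.mul_left ε)
  have hBgs : Summable Bg := by
    refine (summable_prod_of_nonneg hBg0).mpr ⟨fun j => ?_, ?_⟩
    · exact (hgs j).mul_right (|x j|)
    · rw [houterg]; exact hgout
  have hBcs : Summable Bc := by
    refine (summable_prod_of_nonneg hBc0).mpr ⟨fun j => ?_, ?_⟩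
    · exact (hcs j).mul_right (|x j| * W j)
    · rw [houterc]; exact hcout
  have hBgtsum : ∑' p, Bg p ≤ ε * X := by
    rw [Summable.tsum_prod' hBgs (fun j => (hgs j).mul_right (|x j|)), houterg]
    calc (∑' j, (∑' i, g j i) * |x j|) ≤ ∑' j, ε * |x j| :=
          Summable.tsum_le_tsum (fun j => mul_le_mul_of_nonneg_right (hgt j) (abs_nonneg _))
            hgout (habs.mul_left ε)
      _ = ε * ∑' j, |x j| := tsum_mul_left
      _ ≤ ε * X := mul_le_mul_of_nonneg_left habsX hε
  have hBctsum : ∑' p, Bc p ≤ ε * X := by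
    rw [Summable.tsum_prod' hBcs (fun j => (hcs j).mul_right (|x j| * W j)), houterc]
    calc (∑' j, (∑' i, c j i) * (|x j| * W j)) ≤ ∑' j, ε * (|x j| * W j) :=
          Summable.tsum_le_tsum (fun j => mul_le_mul_of_nonneg_right (hct j)
            (mul_nonneg (abs_nonneg _) (hW0 _))) hcout (hx.mul_left ε)
      _ = ε * X := tsum_mul_left
  -- F ∘ swap is bounded by Bg + Bc
  have hFle : ∀ p : ℤ × ℤ, F (p.2, p.1) ≤ Bg p + Bc p := by
    rintro ⟨j, i⟩
    show F (i, j) ≤ Bg (j, i) + Bc (j, i)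
    by_cases h : j = i
    · have hF : F (i, j) = 0 := by simp [hFdef, h]
      rw [hF]
      exact add_nonneg (hBg0 (j, i)) (hBc0 (j, i))
    · have h2 : i ≠ j := fun hh => h hh.symm
      have key := hWle i j h2
      show (if j = i then 0 else |C i j| * |x j|) * W i ≤
        g j i * |x j| + c j i * (|x j| * W j)
      rw [if_neg h]
      have hgv : g j i = |C i j| * |(i : ℝ) - (j : ℝ)| ^ τ := if_neg h2
      have hcv : c j i = |C i j| := if_neg h2
      rw [hgv, hcv]
      calc |C i j| * |x j| * W i ≤ |C i j| * |x j| * (|(i : ℝ) - (j : ℝ)| ^ τ + W j) :=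
            mul_le_mul_of_nonneg_left key (mul_nonneg (abs_nonneg _) (abs_nonneg _))
        _ = |C i j| * |(i : ℝ) - (j : ℝ)| ^ τ * |x j| + |C i j| * (|x j| * W j) := by ring
  have hFswap : Summable fun p : ℤ × ℤ => F (p.2, p.1) :=
    Summable.of_nonneg_of_le (fun p => hF0 _) hFle (hBgs.add hBcs)
  have hFs : Summable F := hFswap.prod_symm
  have hFtsum : ∑' p, F p ≤ 2 * (ε * X) := by
    have h1 : ∑' p : ℤ × ℤ, F p = ∑' p : ℤ × ℤ, F (p.2, p.1) :=
      ((Equiv.prodComm ℤ ℤ).tsum_eq F).symm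
    rw [h1]
    calc (∑' p : ℤ × ℤ, F (p.2, p.1)) ≤ ∑' p, (Bg p + Bc p) :=
          Summable.tsum_le_tsum hFle hFswap (hBgs.add hBcs)
      _ = (∑' p, Bg p) + ∑' p, Bc p := Summable.tsum_add hBgs hBcs
      _ ≤ ε * X + ε * X := add_le_add hBgtsum hBctsum
      _ = 2 * (ε * X) := by ring
  -- identify row sums of F
  set S : ℤ → ℝ := fun i => ∑' j : {j : ℤ // j ≠ i}, |C i j.1 * x j.1| with hSdef
  have hrow : ∀ i, (∑' j : ℤ, F (i, j)) = S i * W i := by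
    intro i
    have h2 : (∑' j : ℤ, F (i, j))
        = (∑' j : ℤ, if j = i then 0 else |C i j| * |x j|) * W i := by
      show (∑' j, (if j = i then 0 else |C i j| * |x j|) * W i) = _
      exact tsum_mul_right
    rw [h2]
    congr 1
    have h3 := tsum_subtype {j : ℤ | j ≠ i} (fun j => |C i j * x j|)
    rw [indicator_ne_eq] at h3
    have h4 : S i = ∑' j : ℤ, (if j = i then 0 else |C i j * x j|) := h3
    rw [h4]
    refine tsum_congr fun j => ?_
    by_cases h : j = i <;> simp [h, abs_mul]
  have hrows := (summable_prod_of_nonneg hF0).mp hFs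
  have hSWs : Summable fun i => S i * W i := by
    have := hrows.2
    refine this.congr fun i => (hrow i)
  have hSWt : ∑' i, S i * W i ≤ 2 * (ε * X) := by
    have h2 : ∑' i, S i * W i = ∑' p, F p := by
      rw [Summable.tsum_prod' hFs hrows.1]
      exact (tsum_congr fun i => (hrow i)).symm
    rw [h2]; exact hFtsum
  -- inner summability and abs bound
  have hinner : ∀ i, Summable fun j : {j : ℤ // j ≠ i} => |C i j.1 * x j.1| := by
    intro i
    refine Summable.of_nonneg_of_le (fun j => abs_nonneg _) (fun j => ?_)
      (((habs.subtype {j : ℤ | j ≠ i}).mul_left ε))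
    rw [abs_mul]
    refine mul_le_mul_of_nonneg_right ?_ (abs_nonneg _)
    rw [hsymm i j.1]
    exact hCε j.1 i j.2
  have habstsum : ∀ i, |∑' j : {j : ℤ // j ≠ i}, C i j.1 * x j.1| ≤ S i := by
    intro i
    exact norm_tsum_le_tsum_norm (f := fun j : {j : ℤ // j ≠ i} => C i j.1 * x j.1) (hinner i)
  -- conclude
  constructor
  · refine Summable.of_nonneg_of_le (fun i => mul_nonneg (abs_nonneg _) (hW0 i))
      (fun i => ?_) hSWs
    exact mul_le_mul_of_nonneg_right (habstsum i) (hW0 i)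
  · calc (∑' i : ℤ, |∑' j : {j : ℤ // j ≠ i}, C i j.1 * x j.1| * W i)
        ≤ ∑' i, S i * W i := by
          refine Summable.tsum_le_tsum (fun i => mul_le_mul_of_nonneg_right (habstsum i) (hW0 i))
            ?_ hSWs
          refine Summable.of_nonneg_of_le (fun i => mul_nonneg (abs_nonneg _) (hW0 i))
            (fun i => mul_le_mul_of_nonneg_right (habstsum i) (hW0 i)) hSWs
      _ ≤ 2 * (ε * X) := hSWt
      _ ≤ 3 * ε * X := by nlinarith
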